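/- In the 2-HST (X, d_X) built from the labeled perfect 2^d-ary tree, fix i_max = ⌊log₂(2/ε)⌋ (so 1/ε ≤ 2^{i_max} < 2/ε) and assume ε^{-d} ≤ n. Then any (1+ε)-spanner G of X has the property that every point u ∈ X is joined in G to at least 2^{d·i_max} − 2^{d(i_max−1)} ≥ ε^{-d}/2 points at distance exactly 2^{i_max} ≥ 1/ε from u, so the total edge weight of G is at least n·ε^{-(d+1)}/4. -/

import Mathlib

/-!
The tree metric is an ultrametric whose nonzero values are at least `2`, so a path from `u` to `v`
through a third point `w` weighs at least `d(u,w) + d(w,v) ≥ d(u,v) + 2`. For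
`d(u,v) = 2^i_max` the spanner allows only `ε·2^i_max < 2` of slack, hence every such pair is an
edge. The leaves within distance `2^i` of `u` are those agreeing with `u` on the first `L - i`
coordinates, `2^(d·i)` of them, so the sphere of radius `2^i_max` has
`2^(d·i_max) - 2^(d·(i_max-1))` points; each contributes an edge of weight `2^i_max ≥ 1/ε`.
-/

/-- Index of the first coordinate (counting from the root) where two leaves of the
perfect `2^d`-ary tree of depth `L` differ. -/
noncomputable def firstDiff (d L : ℕ) (u v : Fin L → Fin (2 ^ d)) : ℕ :=
  sInf {i | ∃ hi : i < L, u ⟨i, hi⟩ ≠ v ⟨i, hi⟩}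

/-- The 2-HST metric on the `(2^d)^L` leaves of the labeled perfect `2^d`-ary tree:
`d_X(u,v)` is the label `2^(height)` of the LCA of `u` and `v`. -/
noncomputable def treeDist (d L : ℕ) (u v : Fin L → Fin (2 ^ d)) : ℝ :=
  if u = v then 0 else 2 ^ (L - firstDiff d L u v)

/-- The weight of a path (list of vertices): sum of distances of consecutive pairs. -/
def pathWeight {X : Type*} (dX : X → X → ℝ) : List X → ℝ
  | [] => 0
  | [_] => 0
  | a :: b :: l => dX a b + pathWeight dX (b :: l)

/-- `(X,E)` is a `t`-spanner of `(X,dX)`. -/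
def IsSpanner {X : Type*} (dX : X → X → ℝ) (E : X → X → Prop) (t : ℝ) : Prop :=
  ∀ u v : X, ∃ p : List X, p.Chain' E ∧ p.head? = some u ∧ p.getLast? = some v ∧
    pathWeight dX p ≤ t * dX u v

open Classical in
/-- The total weight of the graph `(X,E)` with edge weights equal to distances
(each ordered pair counted once after dividing by 2). -/
noncomputable def graphWeight {X : Type*} [Fintype X] (dX : X → X → ℝ)
    (E : X → X → Prop) : ℝ :=
  (∑ u, ∑ v, if E u v then dX u v else 0) / 2

open Finset

section PathWeight

variable {X : Type*} {dX : X → X → ℝ}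

lemma dist_add_dist_le_pathWeight (hself : ∀ a, dX a a = 0)
    (htri : ∀ a b c, dX a c ≤ dX a b + dX b c) {b w : X} :
    ∀ {a : X} {l : List X}, (a :: l).getLast? = some b → w ∈ a :: l →
      dX a w + dX w b ≤ pathWeight dX (a :: l)
  | a, [], hlast, hw => by
    obtain rfl : a = b := by simpa using hlast
    obtain rfl : w = a := by simpa using hw
    simp [pathWeight, hself]
  | a, c :: l, hlast, hw => by
    rw [List.getLast?_cons_cons] at hlast
    change _ ≤ dX a c + pathWeight dX (c :: l)
    rcases List.mem_cons.mp hw with rfl | hw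
    · have := dist_add_dist_le_pathWeight hself htri hlast List.mem_cons_self
      linarith [htri w c b, hself c, hself w]
    · have := dist_add_dist_le_pathWeight hself htri hlast hw
      linarith [htri a c w]

lemma rel_of_chain_of_forall_mem_eq_or_eq {E : X → X → Prop} {u v : X} (huv : u ≠ v) :
    ∀ {l : List X}, (u :: l).IsChain E → (u :: l).getLast? = some v →
      (∀ w ∈ u :: l, w = u ∨ w = v) → E u v
  | [], _, hlast, _ => absurd (by simpa using hlast) huv
  | c :: l, hchain, hlast, hmem => by
    rw [List.isChain_cons_cons] at hchain
    rcases hmem c (by simp) with rfl | rfl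
    · exact rel_of_chain_of_forall_mem_eq_or_eq huv hchain.2
        (by rwa [List.getLast?_cons_cons] at hlast) fun w hw => hmem w (List.mem_cons_of_mem _ hw)
    · exact hchain.1

lemma rel_of_pathWeight_lt_add {E : X → X → Prop} {δ : ℝ} (hself : ∀ a, dX a a = 0)
    (htri : ∀ a b c, dX a c ≤ dX a b + dX b c)
    (hultra : ∀ a b c, dX a c ≤ max (dX a b) (dX b c))
    (hsep : ∀ a b, a ≠ b → δ ≤ dX a b) {u v : X} (huv : u ≠ v) {p : List X}
    (hchain : p.IsChain E) (hhead : p.head? = some u) (hlast : p.getLast? = some v)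
    (hweight : pathWeight dX p < dX u v + δ) : E u v := by
  obtain ⟨l, rfl⟩ : ∃ l, p = u :: l := by
    cases p with
    | nil => simp at hhead
    | cons a l => exact ⟨l, by simpa using hhead⟩
  refine rel_of_chain_of_forall_mem_eq_or_eq huv hchain hlast fun w hw => ?_
  by_contra! hwuv
  have hdetour := dist_add_dist_le_pathWeight hself htri hlast hw
  have := hsep u w hwuv.1.symm
  have := hsep w v hwuv.2
  rcases max_cases (dX u w) (dX w v) with ⟨hmax, _⟩ | ⟨hmax, _⟩ <;>
    linarith [hultra u w v]

end PathWeight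

lemma card_filter_forall_lt_eq {α : Type*} [Fintype α] [DecidableEq α] {L : ℕ}
    (u : Fin L → α) (k : ℕ) :
    #{v : Fin L → α | ∀ j : Fin L, j.1 < k → u j = v j} = Fintype.card α ^ (L - k) := by
  have hpi : ({v : Fin L → α | ∀ j : Fin L, j.1 < k → u j = v j} : Finset _) =
      Fintype.piFinset fun j => if j.1 < k then {u j} else univ := by
    ext v
    simp only [mem_filter, mem_univ, true_and, Fintype.mem_piFinset]
    refine forall_congr' fun j => ?_
    split_ifs <;> simp_all [eq_comm]
  have hfree : #{j : Fin L | ¬ j.1 < k} = L - k := by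
    rw [filter_not, card_sdiff_of_subset (filter_subset _ _), Fin.card_filter_val_lt, card_univ,
      Fintype.card_fin]
    omega
  rw [hpi, Fintype.card_piFinset]
  simp only [apply_ite card, card_singleton, card_univ]
  rw [prod_ite, prod_const_one, one_mul, prod_const, hfree]

section TreeDist

variable {d L : ℕ} {u v w : Fin L → Fin (2 ^ d)}

lemma firstDiff_spec (h : u ≠ v) :
    ∃ hlt : firstDiff d L u v < L, u ⟨_, hlt⟩ ≠ v ⟨_, hlt⟩ := by
  obtain ⟨i, hi⟩ := Function.ne_iff.mp h
  exact Nat.sInf_mem (s := {i | ∃ hi : i < L, u ⟨i, hi⟩ ≠ v ⟨i, hi⟩}) ⟨i, i.2, hi⟩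

lemma firstDiff_lt (h : u ≠ v) : firstDiff d L u v < L := (firstDiff_spec h).1

lemma forall_lt_eq_iff_le_firstDiff (h : u ≠ v) {k : ℕ} :
    (∀ j : Fin L, j.1 < k → u j = v j) ↔ k ≤ firstDiff d L u v := by
  constructor
  · intro hagree
    by_contra! hlt
    obtain ⟨_, hne⟩ := firstDiff_spec h
    exact hne (hagree _ hlt)
  · intro hk j hj
    by_contra hne
    have : firstDiff d L u v ≤ j := Nat.sInf_le ⟨j.2, hne⟩
    omega

lemma treeDist_self (u : Fin L → Fin (2 ^ d)) : treeDist d L u u = 0 := if_pos rfl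

lemma treeDist_of_ne (h : u ≠ v) : treeDist d L u v = 2 ^ (L - firstDiff d L u v) := if_neg h

lemma treeDist_nonneg (u v : Fin L → Fin (2 ^ d)) : 0 ≤ treeDist d L u v := by
  unfold treeDist; split <;> positivity

lemma two_le_treeDist (h : u ≠ v) : 2 ≤ treeDist d L u v := by
  rw [treeDist_of_ne h]
  have := firstDiff_lt h
  exact le_self_pow₀ one_le_two (by omega)

lemma treeDist_le_two_pow_iff {i : ℕ} :
    treeDist d L u v ≤ 2 ^ i ↔ ∀ j : Fin L, j.1 < L - i → u j = v j := by
  rcases eq_or_ne u v with rfl | h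
  · simp [treeDist_self]
  rw [treeDist_of_ne h, pow_le_pow_iff_right₀ one_lt_two, forall_lt_eq_iff_le_firstDiff h]
  have := firstDiff_lt h
  omega

lemma treeDist_le_max : treeDist d L u w ≤ max (treeDist d L u v) (treeDist d L v w) := by
  rcases eq_or_ne u w with rfl | huw
  · exact (treeDist_self u).trans_le (le_max_of_le_left (treeDist_nonneg _ _))
  rcases eq_or_ne u v with rfl | huv
  · exact le_max_right _ _
  rcases eq_or_ne v w with rfl | hvw
  · exact le_max_left _ _
  have hmin : min (firstDiff d L u v) (firstDiff d L v w) ≤ firstDiff d L u w := by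
    rw [← forall_lt_eq_iff_le_firstDiff huw]
    intro j hj
    rw [lt_min_iff] at hj
    exact ((forall_lt_eq_iff_le_firstDiff huv).mpr le_rfl j hj.1).trans
      ((forall_lt_eq_iff_le_firstDiff hvw).mpr le_rfl j hj.2)
  rw [treeDist_of_ne huw, treeDist_of_ne huv, treeDist_of_ne hvw]
  rcases min_cases (firstDiff d L u v) (firstDiff d L v w) with ⟨hm, _⟩ | ⟨hm, _⟩ <;>
    rw [hm] at hmin
  · exact le_max_of_le_left (pow_le_pow_right₀ one_le_two (by omega))
  · exact le_max_of_le_right (pow_le_pow_right₀ one_le_two (by omega))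

lemma treeDist_triangle : treeDist d L u w ≤ treeDist d L u v + treeDist d L v w :=
  treeDist_le_max.trans (max_le_add_of_nonneg (treeDist_nonneg _ _) (treeDist_nonneg _ _))

lemma card_filter_treeDist_le (u : Fin L → Fin (2 ^ d)) {i : ℕ} (hi : i ≤ L) :
    #{v | treeDist d L u v ≤ 2 ^ i} = 2 ^ (d * i) := by
  simp only [treeDist_le_two_pow_iff]
  rw [card_filter_forall_lt_eq, Fintype.card_fin, ← pow_mul, Nat.sub_sub_self hi]

lemma treeDist_eq_two_pow_iff {i : ℕ} (hi : 1 ≤ i) :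
    treeDist d L u v = 2 ^ i ↔
      treeDist d L u v ≤ 2 ^ i ∧ ¬ treeDist d L u v ≤ 2 ^ (i - 1) := by
  refine ⟨fun h => ⟨h.le, h ▸ not_le.mpr (pow_lt_pow_right₀ one_lt_two (by omega))⟩, ?_⟩
  rintro ⟨hle, hgt⟩
  have h : u ≠ v := by
    rintro rfl
    exact hgt (by rw [treeDist_self]; positivity)
  rw [treeDist_of_ne h] at hle hgt ⊢
  rw [pow_le_pow_iff_right₀ one_lt_two] at hle hgt
  congr 1
  omega

lemma ncard_treeDist_eq_two_pow (u : Fin L → Fin (2 ^ d)) {i : ℕ} (hi : 1 ≤ i)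
    (hiL : i ≤ L) :
    (({v | treeDist d L u v = 2 ^ i} : Set _).ncard : ℝ) = 2 ^ (d * i) - 2 ^ (d * (i - 1)) := by
  let ball (k : ℕ) : Finset (Fin L → Fin (2 ^ d)) := {v | treeDist d L u v ≤ 2 ^ k}
  have hsub : ball (i - 1) ⊆ ball i := fun v hv => by
    simp only [ball, mem_filter, mem_univ, true_and] at hv ⊢
    exact hv.trans (pow_le_pow_right₀ one_le_two (by omega))
  have hset : {v | treeDist d L u v = 2 ^ i} = ↑(ball i \ ball (i - 1)) := by
    ext v
    simp [ball, treeDist_eq_two_pow_iff hi]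
  have hpow : 2 ^ (d * (i - 1)) ≤ 2 ^ (d * i) :=
    Nat.pow_le_pow_right two_pos (Nat.mul_le_mul_left _ (Nat.sub_le _ _))
  rw [hset, Set.ncard_coe_finset, card_sdiff_of_subset hsub, card_filter_treeDist_le u hiL,
    card_filter_treeDist_le u (by omega), Nat.cast_sub hpow, Nat.cast_pow, Nat.cast_pow,
    Nat.cast_ofNat]

end TreeDist

lemma half_le_two_pow_mul_sub {d i : ℕ} (hd : 1 ≤ d) (hi : 1 ≤ i) :
    (2 : ℝ) ^ (d * i) / 2 ≤ 2 ^ (d * i) - 2 ^ (d * (i - 1)) := by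
  obtain ⟨k, rfl⟩ : ∃ k, i = k + 1 := ⟨i - 1, by omega⟩
  have : (2 : ℝ) * 2 ^ (d * k) ≤ 2 ^ (d * (k + 1)) := by
    rw [← pow_succ', mul_add, mul_one]
    exact pow_le_pow_right₀ one_le_two (by omega)
  rw [Nat.add_sub_cancel]
  linarith

lemma card_mul_mul_le_graphWeight {X : Type*} [Fintype X] {dX : X → X → ℝ}
    {E : X → X → Prop} {m r : ℝ} (hnonneg : ∀ u v, 0 ≤ dX u v) (hr : 0 ≤ r)
    (hdeg : ∀ u, m ≤ ({v | E u v ∧ dX u v = r} : Set X).ncard) :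
    Fintype.card X * m * r / 2 ≤ graphWeight dX E := by
  classical
  have hrow (u : X) : m * r ≤ ∑ v, if E u v then dX u v else 0 := by
    let S : Finset X := {v | E u v ∧ dX u v = r}
    have hS : m ≤ #S := by simpa [S, ← Set.ncard_coe_finset] using hdeg u
    calc m * r ≤ #S * r := mul_le_mul_of_nonneg_right hS hr
      _ = ∑ v ∈ S, if E u v then dX u v else 0 := by
        rw [← nsmul_eq_mul, ← sum_const]
        refine sum_congr rfl fun v hv => ?_
        simp only [S, mem_filter, mem_univ, true_and] at hv
        rw [if_pos hv.1, hv.2]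
      _ ≤ ∑ v, if E u v then dX u v else 0 :=
        sum_le_sum_of_subset_of_nonneg (subset_univ S) fun v _ _ => by
          split <;> simp [hnonneg]
  unfold graphWeight
  gcongr
  calc Fintype.card X * m * r = ∑ _u : X, m * r := by simp [mul_assoc]
    _ ≤ _ := sum_le_sum fun u _ => hrow u

theorem stmt9_general (d L i_max : ℕ) (hd : 1 ≤ d) (ε : ℝ) (hε0 : 0 < ε) (hε1 : ε < 1)
    (hiL : i_max ≤ L)
    (hlow : ε⁻¹ ≤ 2 ^ i_max) (hhigh : (2 : ℝ) ^ i_max < 2 / ε)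
    (E : (Fin L → Fin (2 ^ d)) → (Fin L → Fin (2 ^ d)) → Prop)
    (hspan : IsSpanner (treeDist d L) E (1 + ε)) :
    (∀ u, (2 : ℝ) ^ (d * i_max) - 2 ^ (d * (i_max - 1)) ≤
      (Set.ncard {v | E u v ∧ treeDist d L u v = 2 ^ i_max} : ℝ)) ∧
    (ε⁻¹ ^ d / 2 ≤ (2 : ℝ) ^ (d * i_max) - 2 ^ (d * (i_max - 1))) ∧
    ((((2 ^ d) ^ L : ℕ) : ℝ) * ε⁻¹ ^ (d + 1) / 4 ≤ graphWeight (treeDist d L) E) := by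
  have hi : 1 ≤ i_max := by
    by_contra! h0
    rw [Nat.lt_one_iff.mp h0, pow_zero] at hlow
    linarith [(one_lt_inv₀ hε0).mpr hε1]
  have hedge (u v) (huv : treeDist d L u v = 2 ^ i_max) : E u v := by
    have hne : u ≠ v := by rintro rfl; rw [treeDist_self] at huv; exact (pow_pos two_pos _).ne huv
    obtain ⟨p, hchain, hhead, hlast, hweight⟩ := hspan u v
    refine rel_of_pathWeight_lt_add treeDist_self (fun _ _ _ => treeDist_triangle)
      (fun _ _ _ => treeDist_le_max) (fun _ _ => two_le_treeDist) hne hchain hhead hlast ?_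
    rw [huv] at hweight ⊢
    have : ε * 2 ^ i_max < 2 := by rwa [lt_div_iff₀ hε0, mul_comm] at hhigh
    linarith
  have hdeg (u) : (2 : ℝ) ^ (d * i_max) - 2 ^ (d * (i_max - 1)) ≤
      (Set.ncard {v | E u v ∧ treeDist d L u v = 2 ^ i_max} : ℝ) := by
    have hset : {v | E u v ∧ treeDist d L u v = 2 ^ i_max} = {v | treeDist d L u v = 2 ^ i_max} :=
      Set.ext fun v => and_iff_right_of_imp (hedge u v)
    rw [hset, ncard_treeDist_eq_two_pow u hi hiL]
  have hsize : ε⁻¹ ^ d / 2 ≤ (2 : ℝ) ^ (d * i_max) - 2 ^ (d * (i_max - 1)) :=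
    calc ε⁻¹ ^ d / 2 ≤ (2 : ℝ) ^ (d * i_max) / 2 := by
          gcongr
          rw [mul_comm, pow_mul]
          exact pow_le_pow_left₀ (by positivity) hlow d
      _ ≤ _ := half_le_two_pow_mul_sub hd hi
  refine ⟨hdeg, hsize, ?_⟩
  calc (((2 ^ d) ^ L : ℕ) : ℝ) * ε⁻¹ ^ (d + 1) / 4
      = Fintype.card (Fin L → Fin (2 ^ d)) * (ε⁻¹ ^ d / 2) * ε⁻¹ / 2 := by
        simp only [Fintype.card_fun, Fintype.card_fin]
        ring
    _ ≤ Fintype.card (Fin L → Fin (2 ^ d)) * ((2 : ℝ) ^ (d * i_max) - 2 ^ (d * (i_max - 1))) *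
          2 ^ i_max / 2 := by
        gcongr
        have : (0 : ℝ) ≤ ε⁻¹ ^ d / 2 := by positivity
        exact mul_nonneg (Nat.cast_nonneg _) (this.trans hsize)
    _ ≤ graphWeight (treeDist d L) E :=
        card_mul_mul_le_graphWeight treeDist_nonneg (by positivity) hdeg

/-- in the 2-HST on the `n = (2^d)^L` leaves, with
`1/ε ≤ 2^i_max < 2/ε` and `ε⁻¹^d ≤ n`, every `(1+ε)`-spanner joins each point `u`
to at least `2^(d·i_max) − 2^(d·(i_max−1)) ≥ ε⁻¹^d / 2` points at distance exactly
`2^i_max` from `u`, and hence has total edge weight at least `n·ε⁻¹^(d+1)/4`. -/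
theorem stmt9 (d L i_max : ℕ) (hd : 1 ≤ d) (ε : ℝ) (hε0 : 0 < ε) (hε1 : ε < 1)
    (hiL : i_max ≤ L)
    (hlow : ε⁻¹ ≤ 2 ^ i_max) (hhigh : (2 : ℝ) ^ i_max < 2 / ε)
    (hn : ε⁻¹ ^ d ≤ (((2 ^ d) ^ L : ℕ) : ℝ))
    (E : (Fin L → Fin (2 ^ d)) → (Fin L → Fin (2 ^ d)) → Prop)
    (hEsymm : Symmetric E) (hEirr : ∀ x, ¬ E x x)
    (hspan : IsSpanner (treeDist d L) E (1 + ε)) :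
    (∀ u, (2 : ℝ) ^ (d * i_max) - 2 ^ (d * (i_max - 1)) ≤
      (Set.ncard {v | E u v ∧ treeDist d L u v = 2 ^ i_max} : ℝ)) ∧
    (ε⁻¹ ^ d / 2 ≤ (2 : ℝ) ^ (d * i_max) - 2 ^ (d * (i_max - 1))) ∧
    ((((2 ^ d) ^ L : ℕ) : ℝ) * ε⁻¹ ^ (d + 1) / 4 ≤ graphWeight (treeDist d L) E) :=
  stmt9_general d L i_max hd ε hε0 hε1 hiL hlow hhigh E hspan
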